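/- There exists a constant K, depending only on B, T, ‖M‖ and ‖M⁻¹‖, such that for every initial condition the solution (u,v) of the variational system satisfies: ‖u(·)‖_∞ + ‖v(·)‖_∞ ≤ K (‖p(·)‖_∞² + ‖f(q(·))‖_∞); ‖ü(·)‖_∞ ≤ K (‖p(·)‖_∞³ + ‖p(·)‖_∞ ‖f(q(·))‖_∞ + ‖f(q(·))‖_∞); and ‖v̈(·)‖_∞ ≤ K (‖p(·)‖_∞² + ‖f(q(·))‖_∞). -/

import Mathlib

/-!
Along the flow, `ṗ = f(q)`, and `p̈ = f'(q)M⁻¹p`, `p⃛`, `p⁗` are polynomials in `M⁻¹p`, `M⁻¹f(q)`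
with coefficients `f⁽ʲ⁾(q)`. With `P = ‖p‖_∞`, `F = ‖f(q)‖_∞` and `C = ‖M⁻¹‖` this gives
`‖p̈‖ ≲ P`, `‖p⃛‖ ≲ P² + F` and `‖p⁗‖ ≲ P³ + PF + ‖p̈‖`. Landau's inequality
`h‖g'‖ ≤ 2‖g‖_∞ + h²‖g''‖_∞` on `[0, T]`, applied to `ṗ` with step `h` and to `p̈` with step `4h`,
where `16h²BC ≤ 1`, absorbs the `‖p̈‖` term, so `‖p̈‖_∞` and `‖p⃛‖_∞` are `≲ P³ + PF + F`; they
are also `≲ P² + F`, using `‖p̈‖ ≲ P` when `P ≥ 1`. Grönwall's inequality for the linear system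
satisfied by `(u, v)`, whose forcing terms are `p⃛/12` and `M⁻¹p̈/6`, bounds `u` and `v` by the
same quantities, and differentiating the system once more bounds `ü` and `v̈`.
-/

open MeasureTheory Matrix Filter

/-- One leapfrog (Störmer–Verlet) step of length `h` for the Hamiltonian system
`dq/dt = M⁻¹p`, `dp/dt = f(q)` (here `Minv = M⁻¹`):
`q' = q + h M⁻¹p + (h²/2) M⁻¹ f(q)`, `p' = p + (h/2) f(q) + (h/2) f(q')`. -/
noncomputable def leapfrogStep (m : ℕ) (Minv : Matrix (Fin m) (Fin m) ℝ)
    (f : (Fin m → ℝ) → (Fin m → ℝ)) (h : ℝ)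
    (x : (Fin m → ℝ) × (Fin m → ℝ)) : (Fin m → ℝ) × (Fin m → ℝ) :=
  (x.1 + h • Minv.mulVec x.2 + (h ^ 2 / 2) • Minv.mulVec (f x.1),
   x.2 + (h / 2) • f x.1 +
     (h / 2) • f (x.1 + h • Minv.mulVec x.2 + (h ^ 2 / 2) • Minv.mulVec (f x.1)))

/-- The leapfrog approximation `ψ_h^{(T)}` of the time-`T` Hamiltonian flow:
`⌊T/h⌋` leapfrog steps of length `h`. -/
noncomputable def leapfrogT (m : ℕ) (Minv : Matrix (Fin m) (Fin m) ℝ)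
    (f : (Fin m → ℝ) → (Fin m → ℝ)) (T h : ℝ)
    (x : (Fin m → ℝ) × (Fin m → ℝ)) : (Fin m → ℝ) × (Fin m → ℝ) :=
  (leapfrogStep m Minv f h)^[⌊T / h⌋₊] x

/-- The Hamiltonian `H(q,p) = (1/2)⟨p, M⁻¹p⟩ + V(q)` (here `Minv = M⁻¹`). -/
noncomputable def Ham (m : ℕ) (Minv : Matrix (Fin m) (Fin m) ℝ)
    (V : (Fin m → ℝ) → ℝ) (x : (Fin m → ℝ) × (Fin m → ℝ)) : ℝ :=
  (1 / 2) * (x.2 ⬝ᵥ Minv.mulVec x.2) + V x.1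

/-- The third time derivative `d³p/dt³ = f''(q)(M⁻¹p, M⁻¹p) + f'(q) M⁻¹ f(q)`
along a solution `(q(t), p(t))` of the Hamiltonian equations. -/
noncomputable def dddp (m : ℕ) (Minv : Matrix (Fin m) (Fin m) ℝ)
    (f : (Fin m → ℝ) → (Fin m → ℝ)) (qt pt : ℝ → (Fin m → ℝ)) (t : ℝ) :
    Fin m → ℝ :=
  (fderiv ℝ (fderiv ℝ f) (qt t)) (Minv.mulVec (pt t)) (Minv.mulVec (pt t)) +
    (fderiv ℝ f (qt t)) (Minv.mulVec (f (qt t)))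

/-- The third time derivative `d³q/dt³ = M⁻¹ f'(q) M⁻¹ p` along a solution
`(q(t), p(t))` of the Hamiltonian equations. -/
noncomputable def dddq (m : ℕ) (Minv : Matrix (Fin m) (Fin m) ℝ)
    (f : (Fin m → ℝ) → (Fin m → ℝ)) (qt pt : ℝ → (Fin m → ℝ)) (t : ℝ) :
    Fin m → ℝ :=
  Minv.mulVec ((fderiv ℝ f (qt t)) (Minv.mulVec (pt t)))

/-- The sup norm `‖g(·)‖_∞ = sup_{0 ≤ t ≤ T} |g(t)|`. -/
noncomputable def supIcc (m : ℕ) (T : ℝ) (g : ℝ → (Fin m → ℝ)) : ℝ :=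
  ⨆ t : Set.Icc (0:ℝ) T, ‖g (t : ℝ)‖

open Set Real

lemma supIcc_nonneg (m : ℕ) (T : ℝ) (g : ℝ → Fin m → ℝ) : 0 ≤ supIcc m T g :=
  Real.iSup_nonneg fun _ => norm_nonneg _

lemma supIcc_le {m : ℕ} {T c : ℝ} {g : ℝ → Fin m → ℝ} (hT : 0 ≤ T)
    (hc : ∀ t ∈ Icc 0 T, ‖g t‖ ≤ c) : supIcc m T g ≤ c :=
  haveI : Nonempty (Icc (0 : ℝ) T) := ⟨⟨0, left_mem_Icc.2 hT⟩⟩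
  ciSup_le fun t => hc t t.2

lemma norm_le_supIcc {m : ℕ} {T t : ℝ} {g : ℝ → Fin m → ℝ}
    (hg : ContinuousOn g (Icc 0 T)) (ht : t ∈ Icc 0 T) : ‖g t‖ ≤ supIcc m T g := by
  have hbdd := (isCompact_Icc.image_of_continuousOn hg.norm).bddAbove
  rw [image_eq_range] at hbdd
  exact le_ciSup hbdd ⟨t, ht⟩

section

variable {E : Type*} [NormedAddCommGroup E] [NormedSpace ℝ E]

lemma exists_Icc_add_subset_Icc {T h t : ℝ} (hh : 0 ≤ h) (hhT : h ≤ T) (ht : t ∈ Icc 0 T) :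
    ∃ a, Icc a (a + h) ⊆ Icc 0 T ∧ t ∈ Icc a (a + h) := by
  refine ⟨min t (T - h), Icc_subset_Icc (le_min ht.1 (by linarith)) ?_, min_le_left _ _, ?_⟩
  · linarith [min_le_right t (T - h)]
  · linarith [le_min (show t - h ≤ t by linarith) (show t - h ≤ T - h by linarith [ht.2])]

lemma mul_norm_deriv_le {g g' g'' : ℝ → E} {T F G h t : ℝ} (hh : 0 ≤ h) (hhT : h ≤ T)
    (hg : ∀ s ∈ Icc 0 T, HasDerivAt g (g' s) s) (hg' : ∀ s ∈ Icc 0 T, HasDerivAt g' (g'' s) s)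
    (hF : ∀ s ∈ Icc 0 T, ‖g s‖ ≤ F) (hG : ∀ s ∈ Icc 0 T, ‖g'' s‖ ≤ G) (ht : t ∈ Icc 0 T) :
    h * ‖g' t‖ ≤ 2 * F + G * h ^ 2 := by
  obtain ⟨a, hsub, hta⟩ := exists_Icc_add_subset_Icc hh hhT ht
  have hG0 : 0 ≤ G := (norm_nonneg _).trans (hG t ht)
  have hclose : ∀ s ∈ Icc a (a + h), ‖g' s - g' t‖ ≤ G * h := fun s hs => calc
    ‖g' s - g' t‖ ≤ G * ‖s - t‖ :=
      (convex_Icc a (a + h)).norm_image_sub_le_of_norm_hasDerivWithin_le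
        (fun x hx => (hg' x (hsub hx)).hasDerivWithinAt) (fun x hx => hG x (hsub hx)) hta hs
    _ ≤ G * h := by
      gcongr
      rw [Real.norm_eq_abs, abs_le]
      constructor <;> linarith [hs.1, hs.2, hta.1, hta.2]
  have hrem : ‖(g (a + h) - (a + h) • g' t) - (g a - a • g' t)‖ ≤ G * h * ‖a + h - a‖ := by
    refine (convex_Icc a (a + h)).norm_image_sub_le_of_norm_hasDerivWithin_le
      (f := fun s => g s - s • g' t) (fun x hx => ?_) hclose
      (left_mem_Icc.2 (by linarith)) (right_mem_Icc.2 (by linarith))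
    have hφ := (hg x (hsub hx)).sub ((hasDerivAt_id' x).smul_const (g' t))
    rw [one_smul] at hφ
    exact hφ.hasDerivWithinAt
  have hdecomp :
      h • g' t = (g (a + h) - g a) - ((g (a + h) - (a + h) • g' t) - (g a - a • g' t)) := by
    module
  calc h * ‖g' t‖ = ‖h • g' t‖ := by rw [norm_smul, Real.norm_of_nonneg hh]
    _ ≤ (‖g (a + h)‖ + ‖g a‖) + G * h * ‖a + h - a‖ := by
      rw [hdecomp]
      exact (norm_sub_le _ _).trans (add_le_add (norm_sub_le _ _) hrem)
    _ ≤ (F + F) + G * h * h := by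
      rw [add_sub_cancel_left, Real.norm_of_nonneg hh]
      gcongr
      · exact hF _ (hsub (right_mem_Icc.2 (by linarith)))
      · exact hF _ (hsub (left_mem_Icc.2 (by linarith)))
    _ = 2 * F + G * h ^ 2 := by ring

lemma gronwallBound_zero_le {K ε x : ℝ} (hK : 0 ≤ K) (hε : 0 ≤ ε) :
    gronwallBound 0 K ε x ≤ ε * x * exp (K * x) := by
  rcases hK.eq_or_lt with rfl | hK
  · simp [gronwallBound_K0]
  simp only [gronwallBound_of_K_ne_0 hK.ne', zero_mul, zero_add]
  have hexp : exp (K * x) - 1 ≤ K * x * exp (K * x) := by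
    have := Real.add_one_le_exp (-(K * x))
    rw [Real.exp_neg] at this
    have hpos := Real.exp_pos (K * x)
    field_simp at this
    nlinarith
  calc ε / K * (exp (K * x) - 1) ≤ ε / K * (K * x * exp (K * x)) := by gcongr
    _ = ε * x * exp (K * x) := by field_simp

lemma norm_le_of_norm_deriv_le_mul_add {z z' : ℝ → E} {T K ε : ℝ} (hK : 0 ≤ K) (hε : 0 ≤ ε)
    (hz : ∀ t ∈ Icc 0 T, HasDerivAt z (z' t) t) (hz0 : z 0 = 0)
    (hbound : ∀ t ∈ Icc 0 T, ‖z' t‖ ≤ K * ‖z t‖ + ε) :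
    ∀ t ∈ Icc 0 T, ‖z t‖ ≤ ε * T * exp (K * T) := by
  intro t ht
  have hgron := norm_le_gronwallBound_of_norm_deriv_right_le (δ := 0)
    (fun s hs => (hz s hs).continuousAt.continuousWithinAt)
    (fun s hs => (hz s (Ico_subset_Icc_self hs)).hasDerivWithinAt) (by simp [hz0])
    (fun s hs => hbound s (Ico_subset_Icc_self hs)) t ht
  rw [sub_zero] at hgron
  calc ‖z t‖ ≤ ε * t * exp (K * t) := hgron.trans (gronwallBound_zero_le hK hε)
    _ ≤ ε * T * exp (K * T) :=
      mul_le_mul (mul_le_mul_of_nonneg_left ht.2 hε)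
        (exp_le_exp.2 (mul_le_mul_of_nonneg_left ht.2 hK)) (exp_pos _).le
        (mul_nonneg hε (ht.1.trans ht.2))

end

lemma mul_supIcc_deriv_le {m : ℕ} {g g' g'' : ℝ → Fin m → ℝ} {T G h : ℝ} (hh : 0 < h)
    (hhT : h ≤ T) (hg : ∀ s ∈ Icc 0 T, HasDerivAt g (g' s) s)
    (hg' : ∀ s ∈ Icc 0 T, HasDerivAt g' (g'' s) s) (hG : ∀ s ∈ Icc 0 T, ‖g'' s‖ ≤ G) :
    h * supIcc m T g' ≤ 2 * supIcc m T g + G * h ^ 2 := by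
  rw [mul_comm, ← le_div_iff₀ hh]
  refine supIcc_le (hh.le.trans hhT) fun t ht => ?_
  rw [le_div_iff₀ hh, mul_comm]
  exact mul_norm_deriv_le hh.le hhT hg hg'
    (fun s hs => norm_le_supIcc (HasDerivAt.continuousOn hg) hs) hG ht

lemma Matrix.exists_norm_mulVec_le {m : ℕ} (A : Matrix (Fin m) (Fin m) ℝ) :
    ∃ C, 0 ≤ C ∧ ∀ x, ‖A *ᵥ x‖ ≤ C * ‖x‖ :=
  ⟨‖LinearMap.toContinuousLinearMap (Matrix.toLin' A)‖, norm_nonneg _,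
    fun x => by simpa using (LinearMap.toContinuousLinearMap (Matrix.toLin' A)).le_opNorm x⟩

lemma HasDerivAt.matrix_mulVec {m : ℕ} (A : Matrix (Fin m) (Fin m) ℝ) {c : ℝ → Fin m → ℝ}
    {c' : Fin m → ℝ} {t : ℝ} (hc : HasDerivAt c c' t) :
    HasDerivAt (fun s => A *ᵥ c s) (A *ᵥ c') t := by
  have h := (LinearMap.toContinuousLinearMap (Matrix.toLin' A)).hasFDerivAt.comp_hasDerivAt t hc
  simp only [Function.comp_def, LinearMap.coe_toContinuousLinearMap', Matrix.toLin'_apply] at h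
  exact h

lemma contDiff_of_dotProduct_eq_neg_fderiv {m n : ℕ} {V : (Fin m → ℝ) → ℝ}
    {f : (Fin m → ℝ) → Fin m → ℝ} (hV : ContDiff ℝ (n + 1) V)
    (hfV : ∀ q w, f q ⬝ᵥ w = -(fderiv ℝ V q) w) : ContDiff ℝ n f := by
  have hf : f = fun q i => -(fderiv ℝ V q (Pi.single i 1)) := by
    funext q i
    simpa using hfV q (Pi.single i 1)
  rw [hf]
  exact contDiff_pi.2 fun i => ((hV.fderiv_right le_rfl).clm_apply contDiff_const).neg

section Flow

variable {m : ℕ} {A : Matrix (Fin m) (Fin m) ℝ} {f : (Fin m → ℝ) → Fin m → ℝ}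
  {qt pt : ℝ → Fin m → ℝ} {t B C P F S : ℝ}

/-- `d²p/dt² = f'(q) M⁻¹p` along a solution, in the notation of `dddp`. -/
noncomputable def ddp (m : ℕ) (Minv : Matrix (Fin m) (Fin m) ℝ)
    (f : (Fin m → ℝ) → (Fin m → ℝ)) (qt pt : ℝ → (Fin m → ℝ)) (t : ℝ) : Fin m → ℝ :=
  fderiv ℝ f (qt t) (Minv *ᵥ pt t)

/-- `d⁴p/dt⁴` along a solution, in the notation of `dddp`. -/
noncomputable def ddddp (m : ℕ) (Minv : Matrix (Fin m) (Fin m) ℝ)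
    (f : (Fin m → ℝ) → (Fin m → ℝ)) (qt pt : ℝ → (Fin m → ℝ)) (t : ℝ) : Fin m → ℝ :=
  fderiv ℝ (fderiv ℝ (fderiv ℝ f)) (qt t) (Minv *ᵥ pt t) (Minv *ᵥ pt t) (Minv *ᵥ pt t) +
    fderiv ℝ (fderiv ℝ f) (qt t) (Minv *ᵥ f (qt t)) (Minv *ᵥ pt t) +
    (2 : ℝ) • fderiv ℝ (fderiv ℝ f) (qt t) (Minv *ᵥ pt t) (Minv *ᵥ f (qt t)) +
    fderiv ℝ f (qt t) (Minv *ᵥ ddp m Minv f qt pt t)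

lemma dddq_eq_mulVec_ddp : dddq m A f qt pt t = A *ᵥ ddp m A f qt pt t := rfl

lemma hasDerivAt_comp_flow (hf : DifferentiableAt ℝ f (qt t))
    (hq : HasDerivAt qt (A *ᵥ pt t) t) :
    HasDerivAt (fun s => f (qt s)) (ddp m A f qt pt t) t :=
  hf.hasFDerivAt.comp_hasDerivAt t hq

lemma hasDerivAt_ddp (hf' : DifferentiableAt ℝ (fderiv ℝ f) (qt t))
    (hq : HasDerivAt qt (A *ᵥ pt t) t) (hp : HasDerivAt pt (f (qt t)) t) :
    HasDerivAt (ddp m A f qt pt) (dddp m A f qt pt t) t :=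
  (hf'.hasFDerivAt.comp_hasDerivAt t hq).clm_apply (hp.matrix_mulVec A)

lemma hasDerivAt_dddp (hf : DifferentiableAt ℝ f (qt t))
    (hf' : DifferentiableAt ℝ (fderiv ℝ f) (qt t))
    (hf'' : DifferentiableAt ℝ (fderiv ℝ (fderiv ℝ f)) (qt t))
    (hq : HasDerivAt qt (A *ᵥ pt t) t) (hp : HasDerivAt pt (f (qt t)) t) :
    HasDerivAt (dddp m A f qt pt) (ddddp m A f qt pt t) t := by
  have hw := hp.matrix_mulVec A
  have hf''q : HasDerivAt (fun s => fderiv ℝ (fderiv ℝ f) (qt s))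
      (fderiv ℝ (fderiv ℝ (fderiv ℝ f)) (qt t) (A *ᵥ pt t)) t :=
    HasFDerivAt.comp_hasDerivAt (l := fderiv ℝ (fderiv ℝ f)) t hf''.hasFDerivAt hq
  have hquad := (hf''q.clm_apply hw).clm_apply hw
  have hlin := (hf'.hasFDerivAt.comp_hasDerivAt t hq).clm_apply
    ((hasDerivAt_comp_flow hf hq).matrix_mulVec A)
  refine (hquad.add hlin).congr_deriv ?_
  rw [ddddp, two_smul]
  simp only [_root_.add_apply, Function.comp_apply]
  abel

lemma norm_ddp_le (hB₁ : ‖fderiv ℝ f (qt t)‖ ≤ B) (hC₀ : 0 ≤ C)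
    (hC : ∀ x, ‖A *ᵥ x‖ ≤ C * ‖x‖) (hP : ‖pt t‖ ≤ P) :
    ‖ddp m A f qt pt t‖ ≤ B * C * P := by
  rw [mul_assoc]
  exact (fderiv ℝ f (qt t)).le_of_opNorm_le_of_le hB₁ ((hC _).trans (by gcongr))

lemma norm_dddp_le (hB₁ : ‖fderiv ℝ f (qt t)‖ ≤ B) (hB₂ : ‖fderiv ℝ (fderiv ℝ f) (qt t)‖ ≤ B)
    (hC₀ : 0 ≤ C) (hC : ∀ x, ‖A *ᵥ x‖ ≤ C * ‖x‖) (hP : ‖pt t‖ ≤ P) (hF : ‖f (qt t)‖ ≤ F) :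
    ‖dddp m A f qt pt t‖ ≤ B * C ^ 2 * P ^ 2 + B * C * F := by
  have hw : ‖A *ᵥ pt t‖ ≤ C * P := (hC _).trans (by gcongr)
  have hw' : ‖A *ᵥ f (qt t)‖ ≤ C * F := (hC _).trans (by gcongr)
  calc ‖dddp m A f qt pt t‖ ≤ B * (C * P) * (C * P) + B * (C * F) :=
      (norm_add_le _ _).trans (add_le_add
        ((fderiv ℝ (fderiv ℝ f) (qt t)).le_of_opNorm₂_le_of_le hB₂ hw hw)
        ((fderiv ℝ f (qt t)).le_of_opNorm_le_of_le hB₁ hw'))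
    _ = B * C ^ 2 * P ^ 2 + B * C * F := by ring

lemma norm_ddddp_le (hB₁ : ‖fderiv ℝ f (qt t)‖ ≤ B) (hB₂ : ‖fderiv ℝ (fderiv ℝ f) (qt t)‖ ≤ B)
    (hB₃ : @norm _ ContinuousLinearMap.hasOpNorm (fderiv ℝ (fderiv ℝ (fderiv ℝ f)) (qt t)) ≤ B)
    (hC₀ : 0 ≤ C) (hC : ∀ x, ‖A *ᵥ x‖ ≤ C * ‖x‖) (hP : ‖pt t‖ ≤ P) (hF : ‖f (qt t)‖ ≤ F)
    (hS : ‖ddp m A f qt pt t‖ ≤ S) :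
    ‖ddddp m A f qt pt t‖ ≤ B * C ^ 3 * P ^ 3 + 3 * B * C ^ 2 * (P * F) + B * C * S := by
  have hw : ‖A *ᵥ pt t‖ ≤ C * P := (hC _).trans (by gcongr)
  have hw' : ‖A *ᵥ f (qt t)‖ ≤ C * F := (hC _).trans (by gcongr)
  have hw'' : ‖A *ᵥ ddp m A f qt pt t‖ ≤ C * S := (hC _).trans (by gcongr)
  have hf'''w : ‖fderiv ℝ (fderiv ℝ (fderiv ℝ f)) (qt t) (A *ᵥ pt t)‖ ≤ B * (C * P) :=
    ContinuousLinearMap.le_of_opNorm_le_of_le _ hB₃ hw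
  have hcubic := ContinuousLinearMap.le_of_opNorm₂_le_of_le _ hf'''w hw hw
  have hmix := (fderiv ℝ (fderiv ℝ f) (qt t)).le_of_opNorm₂_le_of_le hB₂ hw' hw
  have hmix' := (fderiv ℝ (fderiv ℝ f) (qt t)).le_of_opNorm₂_le_of_le hB₂ hw hw'
  have hlin := (fderiv ℝ f (qt t)).le_of_opNorm_le_of_le hB₁ hw''
  calc ‖ddddp m A f qt pt t‖
      ≤ B * (C * P) * (C * P) * (C * P) + B * (C * F) * (C * P) + 2 * (B * (C * P) * (C * F)) +
          B * (C * S) := by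
        refine (norm_add_le _ _).trans (add_le_add ((norm_add_le _ _).trans (add_le_add
          ((norm_add_le _ _).trans (add_le_add hcubic hmix)) ?_)) hlin)
        rw [norm_smul, Real.norm_two]
        gcongr
    _ = B * C ^ 3 * P ^ 3 + 3 * B * C ^ 2 * (P * F) + B * C * S := by ring

end Flow

section Estimates

variable {m : ℕ} {A : Matrix (Fin m) (Fin m) ℝ} {f : (Fin m → ℝ) → Fin m → ℝ}
  {qt pt u v : ℝ → Fin m → ℝ} {T B C : ℝ}

lemma supIcc_flow_estimates {h : ℝ} (hh : 0 < h) (hhT : 4 * h ≤ T) (hC₀ : 0 ≤ C)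
    (hC : ∀ x, ‖A *ᵥ x‖ ≤ C * ‖x‖) (hB₁ : ∀ x, ‖fderiv ℝ f x‖ ≤ B)
    (hB₂ : ∀ x, ‖fderiv ℝ (fderiv ℝ f) x‖ ≤ B)
    (hB₃ : ∀ x, @norm _ ContinuousLinearMap.hasOpNorm (fderiv ℝ (fderiv ℝ (fderiv ℝ f)) x) ≤ B)
    (hp : ∀ t ∈ Icc 0 T, HasDerivAt pt (f (qt t)) t)
    (hfq : ∀ t ∈ Icc 0 T, HasDerivAt (fun s => f (qt s)) (ddp m A f qt pt t) t)
    (hd₁ : ∀ t ∈ Icc 0 T, HasDerivAt (ddp m A f qt pt) (dddp m A f qt pt t) t)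
    (hd₂ : ∀ t ∈ Icc 0 T, HasDerivAt (dddp m A f qt pt) (ddddp m A f qt pt t) t) :
    let P := supIcc m T pt
    let F := supIcc m T fun t => f (qt t)
    let s₁ := supIcc m T (ddp m A f qt pt)
    let s₂ := supIcc m T (dddp m A f qt pt)
    s₁ ≤ B * C * P ∧ s₂ ≤ B * C ^ 2 * P ^ 2 + B * C * F ∧ h * s₁ ≤ 2 * F + s₂ * h ^ 2 ∧
      4 * h * s₂ ≤
        2 * s₁ + (B * C ^ 3 * P ^ 3 + 3 * B * C ^ 2 * (P * F) + B * C * s₁) * (4 * h) ^ 2 := by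
  intro P F s₁ s₂
  have hT : 0 ≤ T := by linarith
  have hP : ∀ t ∈ Icc 0 T, ‖pt t‖ ≤ P := fun t => norm_le_supIcc (HasDerivAt.continuousOn hp)
  have hF : ∀ t ∈ Icc 0 T, ‖f (qt t)‖ ≤ F := fun t => norm_le_supIcc (HasDerivAt.continuousOn hfq)
  have hs₁ : ∀ t ∈ Icc 0 T, ‖ddp m A f qt pt t‖ ≤ s₁ :=
    fun t => norm_le_supIcc (HasDerivAt.continuousOn hd₁)
  have hs₂ : ∀ t ∈ Icc 0 T, ‖dddp m A f qt pt t‖ ≤ s₂ :=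
    fun t => norm_le_supIcc (HasDerivAt.continuousOn hd₂)
  refine ⟨supIcc_le hT fun t ht => norm_ddp_le (hB₁ _) hC₀ hC (hP t ht),
    supIcc_le hT fun t ht => norm_dddp_le (hB₁ _) (hB₂ _) hC₀ hC (hP t ht) (hF t ht),
    mul_supIcc_deriv_le hh (by linarith) hfq hd₁ hs₂,
    mul_supIcc_deriv_le (by positivity) hhT hd₁ hd₂ fun t ht =>
      norm_ddddp_le (hB₁ _) (hB₂ _) (hB₃ _) hC₀ hC (hP t ht) (hF t ht) (hs₁ t ht)⟩

lemma norm_variational_le {S₁ S₂ : ℝ} (hT : 0 ≤ T) (hC₀ : 0 ≤ C)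
    (hC : ∀ x, ‖A *ᵥ x‖ ≤ C * ‖x‖) (hB₁ : ∀ x, ‖fderiv ℝ f x‖ ≤ B)
    (hS₁ : ∀ t ∈ Icc 0 T, ‖ddp m A f qt pt t‖ ≤ S₁)
    (hS₂ : ∀ t ∈ Icc 0 T, ‖dddp m A f qt pt t‖ ≤ S₂) (hu₀ : u 0 = 0) (hv₀ : v 0 = 0)
    (hu : ∀ t ∈ Icc 0 T, HasDerivAt u
      (A *ᵥ (fderiv ℝ f (qt t)) (v t) + (1 / 12 : ℝ) • dddp m A f qt pt t) t)
    (hv : ∀ t ∈ Icc 0 T, HasDerivAt v (u t - (1 / 6 : ℝ) • dddq m A f qt pt t) t) :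
    ∀ t ∈ Icc 0 T, ‖u t‖ ≤ (S₂ / 12 + C * S₁ / 6) * (T * exp ((C * B + 1) * T)) ∧
      ‖v t‖ ≤ (S₂ / 12 + C * S₁ / 6) * (T * exp ((C * B + 1) * T)) := by
  have hB : 0 ≤ B := (norm_nonneg _).trans (hB₁ 0)
  have hS₁₀ : 0 ≤ S₁ := (norm_nonneg _).trans (hS₁ 0 (left_mem_Icc.2 hT))
  have hS₂₀ : 0 ≤ S₂ := (norm_nonneg _).trans (hS₂ 0 (left_mem_Icc.2 hT))
  have hbound : ∀ t ∈ Icc 0 T,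
      ‖(A *ᵥ (fderiv ℝ f (qt t)) (v t) + (1 / 12 : ℝ) • dddp m A f qt pt t,
        u t - (1 / 6 : ℝ) • dddq m A f qt pt t)‖ ≤
          (C * B + 1) * ‖(u t, v t)‖ + (S₂ / 12 + C * S₁ / 6) := by
    intro t ht
    have hz := norm_nonneg (u t, v t)
    have hCv : ‖A *ᵥ (fderiv ℝ f (qt t)) (v t)‖ ≤ C * (B * ‖(u t, v t)‖) :=
      (hC _).trans (mul_le_mul_of_nonneg_left
        ((fderiv ℝ f (qt t)).le_of_opNorm_le_of_le (hB₁ _) (norm_snd_le (u t, v t))) hC₀)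
    have hCd : ‖A *ᵥ ddp m A f qt pt t‖ ≤ C * S₁ :=
      (hC _).trans (mul_le_mul_of_nonneg_left (hS₁ t ht) hC₀)
    refine norm_prod_le_iff.2 ⟨(norm_add_le _ _).trans ?_, (norm_sub_le _ _).trans ?_⟩
    · rw [norm_smul, Real.norm_of_nonneg (by norm_num)]
      nlinarith [hS₂ t ht, mul_nonneg hC₀ hS₁₀]
    · rw [norm_smul, Real.norm_of_nonneg (by norm_num), dddq_eq_mulVec_ddp]
      nlinarith [norm_fst_le (u t, v t), mul_nonneg (mul_nonneg hC₀ hB) hz]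
  have hgron := norm_le_of_norm_deriv_le_mul_add (by positivity) (by positivity)
    (fun t ht => (hu t ht).prodMk (hv t ht)) (by simp [hu₀, hv₀]) hbound
  intro t ht
  have h := hgron t ht
  rw [mul_assoc] at h
  exact ⟨(norm_fst_le (u t, v t)).trans h, (norm_snd_le (u t, v t)).trans h⟩

lemma norm_ddu_le {t P W S₁ G : ℝ} {ddu : Fin m → ℝ}
    (hf' : DifferentiableAt ℝ (fderiv ℝ f) (qt t)) (hB₁ : ‖fderiv ℝ f (qt t)‖ ≤ B)
    (hB₂ : ‖fderiv ℝ (fderiv ℝ f) (qt t)‖ ≤ B) (hC₀ : 0 ≤ C) (hC : ∀ x, ‖A *ᵥ x‖ ≤ C * ‖x‖)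
    (hP : ‖pt t‖ ≤ P) (hu : ‖u t‖ ≤ W) (hv : ‖v t‖ ≤ W) (hS₁ : ‖ddp m A f qt pt t‖ ≤ S₁)
    (hG : ‖ddddp m A f qt pt t‖ ≤ G) (hq : HasDerivAt qt (A *ᵥ pt t) t)
    (hv' : HasDerivAt v (u t - (1 / 6 : ℝ) • dddq m A f qt pt t) t)
    (hd₂ : HasDerivAt (dddp m A f qt pt) (ddddp m A f qt pt t) t)
    (hddu : HasDerivAt
      (fun s => A *ᵥ (fderiv ℝ f (qt s)) (v s) + (1 / 12 : ℝ) • dddp m A f qt pt s) ddu t) :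
    ‖ddu‖ ≤ C * (B * (C * P) * W + B * (W + C * S₁ / 6)) + G / 12 := by
  have hf'q : HasDerivAt (fun s => fderiv ℝ f (qt s))
      (fderiv ℝ (fderiv ℝ f) (qt t) (A *ᵥ pt t)) t :=
    hf'.hasFDerivAt.comp_hasDerivAt t hq
  rw [hddu.unique (((hf'q.clm_apply hv').matrix_mulVec A).add (hd₂.const_smul (1 / 12 : ℝ)))]
  have hw : ‖A *ᵥ pt t‖ ≤ C * P := (hC _).trans (by gcongr)
  have hv'' : ‖u t - (1 / 6 : ℝ) • dddq m A f qt pt t‖ ≤ W + C * S₁ / 6 := by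
    refine (norm_sub_le _ _).trans (add_le_add hu ?_)
    rw [norm_smul, Real.norm_of_nonneg (by norm_num), dddq_eq_mulVec_ddp]
    nlinarith [hC (ddp m A f qt pt t), mul_le_mul_of_nonneg_left hS₁ hC₀]
  refine (norm_add_le _ _).trans (add_le_add ((hC _).trans (mul_le_mul_of_nonneg_left
    ((norm_add_le _ _).trans (add_le_add ?_ ?_)) hC₀)) ?_)
  · exact (fderiv ℝ (fderiv ℝ f) (qt t)).le_of_opNorm₂_le_of_le hB₂ hw hv
  · exact (fderiv ℝ f (qt t)).le_of_opNorm_le_of_le hB₁ hv''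
  · rw [norm_smul, Real.norm_of_nonneg (by norm_num)]
    linarith

lemma norm_ddv_le {t W S₂ : ℝ} {ddv : Fin m → ℝ} (hB₁ : ‖fderiv ℝ f (qt t)‖ ≤ B) (hC₀ : 0 ≤ C)
    (hC : ∀ x, ‖A *ᵥ x‖ ≤ C * ‖x‖) (hv : ‖v t‖ ≤ W) (hS₂ : ‖dddp m A f qt pt t‖ ≤ S₂)
    (hu' : HasDerivAt u
      (A *ᵥ (fderiv ℝ f (qt t)) (v t) + (1 / 12 : ℝ) • dddp m A f qt pt t) t)
    (hd₁ : HasDerivAt (ddp m A f qt pt) (dddp m A f qt pt t) t)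
    (hddv : HasDerivAt (fun s => u s - (1 / 6 : ℝ) • dddq m A f qt pt s) ddv t) :
    ‖ddv‖ ≤ C * (B * W) + S₂ / 12 + C * S₂ / 6 := by
  rw [hddv.unique (hu'.sub ((hd₁.matrix_mulVec A).const_smul (1 / 6 : ℝ)))]
  have hAv : ‖A *ᵥ (fderiv ℝ f (qt t)) (v t)‖ ≤ C * (B * W) :=
    (hC _).trans (mul_le_mul_of_nonneg_left
      ((fderiv ℝ f (qt t)).le_of_opNorm_le_of_le hB₁ hv) hC₀)
  have hAd : ‖A *ᵥ dddp m A f qt pt t‖ ≤ C * S₂ :=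
    (hC _).trans (mul_le_mul_of_nonneg_left hS₂ hC₀)
  refine (norm_sub_le _ _).trans (add_le_add ((norm_add_le _ _).trans (add_le_add hAv ?_)) ?_)
  all_goals rw [norm_smul, Real.norm_of_nonneg (by norm_num)]; linarith

lemma supIcc_variational_estimates {ddu ddv : ℝ → Fin m → ℝ} (hT : 0 ≤ T) (hC₀ : 0 ≤ C)
    (hC : ∀ x, ‖A *ᵥ x‖ ≤ C * ‖x‖) (hf' : Differentiable ℝ (fderiv ℝ f))
    (hB₁ : ∀ x, ‖fderiv ℝ f x‖ ≤ B) (hB₂ : ∀ x, ‖fderiv ℝ (fderiv ℝ f) x‖ ≤ B)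
    (hB₃ : ∀ x, @norm _ ContinuousLinearMap.hasOpNorm (fderiv ℝ (fderiv ℝ (fderiv ℝ f)) x) ≤ B)
    (hq : ∀ t ∈ Icc 0 T, HasDerivAt qt (A *ᵥ pt t) t)
    (hp : ∀ t ∈ Icc 0 T, HasDerivAt pt (f (qt t)) t)
    (hfq : ∀ t ∈ Icc 0 T, HasDerivAt (fun s => f (qt s)) (ddp m A f qt pt t) t)
    (hd₁ : ∀ t ∈ Icc 0 T, HasDerivAt (ddp m A f qt pt) (dddp m A f qt pt t) t)
    (hd₂ : ∀ t ∈ Icc 0 T, HasDerivAt (dddp m A f qt pt) (ddddp m A f qt pt t) t)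
    (hu₀ : u 0 = 0) (hv₀ : v 0 = 0)
    (hu : ∀ t ∈ Icc 0 T, HasDerivAt u
      (A *ᵥ (fderiv ℝ f (qt t)) (v t) + (1 / 12 : ℝ) • dddp m A f qt pt t) t)
    (hv : ∀ t ∈ Icc 0 T, HasDerivAt v (u t - (1 / 6 : ℝ) • dddq m A f qt pt t) t)
    (hddu : ∀ t ∈ Icc 0 T, HasDerivAt
      (fun s => A *ᵥ (fderiv ℝ f (qt s)) (v s) + (1 / 12 : ℝ) • dddp m A f qt pt s) (ddu t) t)
    (hddv : ∀ t ∈ Icc 0 T, HasDerivAt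
      (fun s => u s - (1 / 6 : ℝ) • dddq m A f qt pt s) (ddv t) t) :
    let P := supIcc m T pt
    let F := supIcc m T fun t => f (qt t)
    let s₁ := supIcc m T (ddp m A f qt pt)
    let s₂ := supIcc m T (dddp m A f qt pt)
    let W := (s₂ / 12 + C * s₁ / 6) * (T * exp ((C * B + 1) * T))
    supIcc m T u + supIcc m T v ≤ 2 * W ∧
      supIcc m T ddu ≤ C * (B * (C * P) * W + B * (W + C * s₁ / 6)) +
        (B * C ^ 3 * P ^ 3 + 3 * B * C ^ 2 * (P * F) + B * C * s₁) / 12 ∧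
      supIcc m T ddv ≤ C * (B * W) + s₂ / 12 + C * s₂ / 6 := by
  intro P F s₁ s₂ W
  have hP : ∀ t ∈ Icc 0 T, ‖pt t‖ ≤ P := fun t => norm_le_supIcc (HasDerivAt.continuousOn hp)
  have hF : ∀ t ∈ Icc 0 T, ‖f (qt t)‖ ≤ F := fun t => norm_le_supIcc (HasDerivAt.continuousOn hfq)
  have hs₁ : ∀ t ∈ Icc 0 T, ‖ddp m A f qt pt t‖ ≤ s₁ :=
    fun t => norm_le_supIcc (HasDerivAt.continuousOn hd₁)
  have hs₂ : ∀ t ∈ Icc 0 T, ‖dddp m A f qt pt t‖ ≤ s₂ :=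
    fun t => norm_le_supIcc (HasDerivAt.continuousOn hd₂)
  have huv := norm_variational_le hT hC₀ hC hB₁ hs₁ hs₂ hu₀ hv₀ hu hv
  refine ⟨?_, supIcc_le hT fun t ht => norm_ddu_le (hf' _) (hB₁ _) (hB₂ _) hC₀ hC (hP t ht)
      (huv t ht).1 (huv t ht).2 (hs₁ t ht) (norm_ddddp_le (hB₁ _) (hB₂ _) (hB₃ _) hC₀ hC
        (hP t ht) (hF t ht) (hs₁ t ht)) (hq t ht) (hv t ht) (hd₂ t ht) (hddu t ht),
    supIcc_le hT fun t ht => norm_ddv_le (hB₁ _) hC₀ hC (huv t ht).2 (hs₂ t ht) (hu t ht)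
      (hd₁ t ht) (hddv t ht)⟩
  rw [two_mul]
  exact add_le_add (supIcc_le hT fun t ht => (huv t ht).1) (supIcc_le hT fun t ht => (huv t ht).2)

end Estimates

section Constants

lemma exists_landau_step {T κ : ℝ} (hT : 0 < T) (hκ : 0 ≤ κ) :
    ∃ h, 0 < h ∧ 4 * h ≤ T ∧ 16 * h ^ 2 * κ ≤ 1 := by
  set h := min (T / 4) (1 / (4 * (κ + 1)))
  have h₀ : 0 < h := by positivity
  have hκh : h * (4 * (κ + 1)) ≤ 1 := (le_div_iff₀ (by positivity)).1 (min_le_right _ _)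
  refine ⟨h, h₀, by linarith [min_le_left (T / 4) (1 / (4 * (κ + 1)))], ?_⟩
  nlinarith [mul_nonneg h₀.le (by positivity : (0 : ℝ) ≤ 4 * (κ + 1))]

lemma cubic_le_mul_weight {B C P F : ℝ} (hB : 0 ≤ B) (hC : 0 ≤ C) (hP : 0 ≤ P) (hF : 0 ≤ F) :
    B * C ^ 3 * P ^ 3 + 3 * B * C ^ 2 * (P * F) ≤
      (B * C ^ 3 + 3 * B * C ^ 2) * (P ^ 3 + P * F + F) := by
  nlinarith [mul_nonneg (mul_nonneg hB (pow_nonneg hC 3)) (mul_nonneg hP hF),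
    mul_nonneg (mul_nonneg hB (pow_nonneg hC 3)) hF,
    mul_nonneg (mul_nonneg hB (pow_nonneg hC 2)) hF,
    mul_nonneg (mul_nonneg hB (pow_nonneg hC 2)) (pow_nonneg hP 3)]

lemma mul_le_of_interpolation {B C h F X s₁ s₂ : ℝ} (hh : 0 < h)
    (hhBC : 16 * h ^ 2 * (B * C) ≤ 1) (hs₁ : 0 ≤ s₁) (h₁ : h * s₁ ≤ 2 * F + s₂ * h ^ 2)
    (h₂ : 4 * h * s₂ ≤ 2 * s₁ + (X + B * C * s₁) * (4 * h) ^ 2) :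
    h * s₁ ≤ 8 * F + 16 * h ^ 3 * X := by
  have e₁ := mul_le_mul_of_nonneg_left h₂ (by positivity : (0 : ℝ) ≤ h / 4)
  have e₂ := mul_le_mul_of_nonneg_right hhBC (by positivity : 0 ≤ h * s₁)
  linear_combination 4 * h₁ + 4 * e₁ + e₂

lemma exists_interpolation_const_cubic {B C h : ℝ} (hB : 0 ≤ B) (hC : 0 ≤ C) (hh : 0 < h)
    (hhBC : 16 * h ^ 2 * (B * C) ≤ 1) :
    ∃ a, 0 ≤ a ∧ ∀ P F s₁ s₂ : ℝ, 0 ≤ P → 0 ≤ F → 0 ≤ s₁ → h * s₁ ≤ 2 * F + s₂ * h ^ 2 →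
      4 * h * s₂ ≤
        2 * s₁ + (B * C ^ 3 * P ^ 3 + 3 * B * C ^ 2 * (P * F) + B * C * s₁) * (4 * h) ^ 2 →
      s₁ ≤ a * (P ^ 3 + P * F + F) ∧ s₂ ≤ a * (P ^ 3 + P * F + F) := by
  set b := B * C ^ 3 + 3 * B * C ^ 2
  set a₁ := 8 / h + 16 * h ^ 2 * b
  set a₂ := a₁ / (4 * h) * 2 + 4 * h * (b + B * C * a₁)
  have hBC : 0 ≤ B * C := mul_nonneg hB hC
  have hb : 0 ≤ b := by positivity
  have ha₁ : 0 ≤ a₁ := by positivity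
  have ha₂ : 0 ≤ a₂ := by positivity
  refine ⟨a₁ + a₂, by positivity, fun P F s₁ s₂ hP hF hs₁ hL₁ hL₂ => ?_⟩
  have hR : 0 ≤ P ^ 3 + P * F + F := by positivity
  have hX := cubic_le_mul_weight hB hC hP hF
  have hs₁R : s₁ ≤ a₁ * (P ^ 3 + P * F + F) := by
    refine le_of_mul_le_mul_left ?_ hh
    calc h * s₁ ≤ 8 * F + 16 * h ^ 3 * (B * C ^ 3 * P ^ 3 + 3 * B * C ^ 2 * (P * F)) :=
          mul_le_of_interpolation hh hhBC hs₁ hL₁ hL₂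
      _ ≤ 8 * (P ^ 3 + P * F + F) + 16 * h ^ 3 * (b * (P ^ 3 + P * F + F)) := by
          gcongr; nlinarith [pow_nonneg hP 3, mul_nonneg hP hF]
      _ = h * (a₁ * (P ^ 3 + P * F + F)) := by simp only [a₁]; field_simp
  have hs₂R : s₂ ≤ a₂ * (P ^ 3 + P * F + F) := by
    refine le_of_mul_le_mul_left ?_ (by positivity : 0 < 4 * h)
    calc 4 * h * s₂
        ≤ 2 * s₁ + (B * C ^ 3 * P ^ 3 + 3 * B * C ^ 2 * (P * F) + B * C * s₁) * (4 * h) ^ 2 :=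
          hL₂
      _ ≤ 2 * (a₁ * (P ^ 3 + P * F + F)) +
          (b * (P ^ 3 + P * F + F) + B * C * (a₁ * (P ^ 3 + P * F + F))) * (4 * h) ^ 2 := by
        gcongr
      _ = 4 * h * (a₂ * (P ^ 3 + P * F + F)) := by simp only [a₂]; field_simp
  exact ⟨hs₁R.trans (mul_le_mul_of_nonneg_right (by linarith) hR),
    hs₂R.trans (mul_le_mul_of_nonneg_right (by linarith) hR)⟩

lemma exists_interpolation_const {B C h : ℝ} (hB : 0 ≤ B) (hC : 0 ≤ C) (hh : 0 < h)
    (hhBC : 16 * h ^ 2 * (B * C) ≤ 1) :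
    ∃ A, 0 ≤ A ∧ ∀ P F s₁ s₂ : ℝ, 0 ≤ P → 0 ≤ F → 0 ≤ s₁ →
      s₁ ≤ B * C * P → s₂ ≤ B * C ^ 2 * P ^ 2 + B * C * F → h * s₁ ≤ 2 * F + s₂ * h ^ 2 →
      4 * h * s₂ ≤
        2 * s₁ + (B * C ^ 3 * P ^ 3 + 3 * B * C ^ 2 * (P * F) + B * C * s₁) * (4 * h) ^ 2 →
      s₁ ≤ A * min (P ^ 2 + F) (P ^ 3 + P * F + F) ∧
        s₂ ≤ A * min (P ^ 2 + F) (P ^ 3 + P * F + F) := by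
  obtain ⟨a, ha, hcubic⟩ := exists_interpolation_const_cubic hB hC hh hhBC
  have hBC : 0 ≤ B * C := mul_nonneg hB hC
  have hBC₂ : 0 ≤ B * C ^ 2 := by positivity
  refine ⟨2 * a + B * C + B * C ^ 2, by positivity, ?_⟩
  intro P F s₁ s₂ hP hF hs₁ hs₁P hs₂P hL₁ hL₂
  obtain ⟨hs₁R, hs₂R⟩ := hcubic P F s₁ s₂ hP hF hs₁ hL₁ hL₂
  have hQ : 0 ≤ P ^ 2 + F := by positivity
  have hR : 0 ≤ P ^ 3 + P * F + F := by positivity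
  -- for `P ≤ 1` the cubic weight is at most twice the quadratic one, for `P ≥ 1` use `s₁ ≲ P`
  have hs₁Q : s₁ ≤ (2 * a + B * C) * (P ^ 2 + F) := by
    rcases le_total P 1 with hP1 | hP1
    · have hRQ : P ^ 3 + P * F + F ≤ 2 * (P ^ 2 + F) := by
        nlinarith [mul_le_mul_of_nonneg_left hP1 (sq_nonneg P), mul_le_mul_of_nonneg_right hP1 hF]
      nlinarith [mul_le_mul_of_nonneg_left hRQ ha, mul_nonneg hBC hQ]
    · nlinarith [mul_nonneg hBC hP, mul_nonneg hBC hF, mul_nonneg ha hQ]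
  have hs₂Q : s₂ ≤ (B * C ^ 2 + B * C) * (P ^ 2 + F) := by
    nlinarith [mul_nonneg hBC₂ hF, mul_nonneg hBC (sq_nonneg P)]
  rw [mul_min_of_nonneg _ _ (by positivity)]
  refine ⟨le_min ?_ ?_, le_min ?_ ?_⟩
  · exact hs₁Q.trans (mul_le_mul_of_nonneg_right (by linarith) hQ)
  · exact hs₁R.trans (mul_le_mul_of_nonneg_right (by linarith) hR)
  · exact hs₂Q.trans (mul_le_mul_of_nonneg_right (by linarith) hQ)
  · exact hs₂R.trans (mul_le_mul_of_nonneg_right (by linarith) hR)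

lemma exists_variational_const_of_le {A B C E : ℝ} (hA : 0 ≤ A) (hB : 0 ≤ B) (hC : 0 ≤ C)
    (hE : 0 ≤ E) :
    ∃ K, 0 < K ∧ ∀ P F N s₁ s₂ : ℝ, 0 ≤ P → 0 ≤ F → N ≤ P ^ 2 + F → N ≤ P ^ 3 + P * F + F →
      s₁ ≤ A * N → s₂ ≤ A * N →
      let W := (s₂ / 12 + C * s₁ / 6) * E
      2 * W ≤ K * (P ^ 2 + F) ∧
        C * (B * (C * P) * W + B * (W + C * s₁ / 6)) +
          (B * C ^ 3 * P ^ 3 + 3 * B * C ^ 2 * (P * F) + B * C * s₁) / 12 ≤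
            K * (P ^ 3 + P * F + F) ∧
        C * (B * W) + s₂ / 12 + C * s₂ / 6 ≤ K * (P ^ 2 + F) := by
  set A' := (A / 12 + C * A / 6) * E
  set b := B * C ^ 3 + 3 * B * C ^ 2
  have hA' : 0 ≤ A' := by positivity
  have hCB : 0 ≤ C * B := mul_nonneg hC hB
  have hCBC : 0 ≤ C * B * C := mul_nonneg hCB hC
  set k₂ := C * B * C * A' + C * B * A' + C * B * C * A / 6 + b / 12 + B * C * A / 12
  set k₃ := C * B * A' + A / 12 + C * A / 6
  have hk₂ : 0 ≤ k₂ := by positivity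
  have hk₃ : 0 ≤ k₃ := by positivity
  refine ⟨1 + 2 * A' + k₂ + k₃, by positivity, ?_⟩
  intro P F N s₁ s₂ hP hF hNQ hNR hs₁ hs₂ W
  have hQ : 0 ≤ P ^ 2 + F := by positivity
  have hR : 0 ≤ P ^ 3 + P * F + F := by positivity
  have hW : W ≤ A' * N := calc
    (s₂ / 12 + C * s₁ / 6) * E ≤ (A * N / 12 + C * (A * N) / 6) * E := by gcongr
    _ = A' * N := by ring
  refine ⟨?_, ?_, ?_⟩
  · nlinarith [mul_le_mul_of_nonneg_left hNQ hA']
  · have hPW : P * W ≤ A' * (P ^ 3 + P * F + F) := by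
      nlinarith [mul_le_mul_of_nonneg_left hW hP, mul_le_mul_of_nonneg_left hNQ hP,
        mul_nonneg hP hA']
    have hWR : W ≤ A' * (P ^ 3 + P * F + F) := hW.trans (mul_le_mul_of_nonneg_left hNR hA')
    have hs₁R : s₁ ≤ A * (P ^ 3 + P * F + F) := hs₁.trans (mul_le_mul_of_nonneg_left hNR hA)
    have hDu : C * (B * (C * P) * W + B * (W + C * s₁ / 6)) +
        (B * C ^ 3 * P ^ 3 + 3 * B * C ^ 2 * (P * F) + B * C * s₁) / 12 ≤
          k₂ * (P ^ 3 + P * F + F) := by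
      simp only [k₂]
      linarith [mul_le_mul_of_nonneg_left hPW hCBC, mul_le_mul_of_nonneg_left hWR hCB,
        mul_le_mul_of_nonneg_left hs₁R hCBC, mul_le_mul_of_nonneg_left hs₁R (mul_nonneg hB hC),
        cubic_le_mul_weight hB hC hP hF]
    exact hDu.trans (mul_le_mul_of_nonneg_right (by linarith) hR)
  · have hWQ : W ≤ A' * (P ^ 2 + F) := hW.trans (mul_le_mul_of_nonneg_left hNQ hA')
    have hs₂Q : s₂ ≤ A * (P ^ 2 + F) := hs₂.trans (mul_le_mul_of_nonneg_left hNQ hA)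
    have hDv : C * (B * W) + s₂ / 12 + C * s₂ / 6 ≤ k₃ * (P ^ 2 + F) := by
      simp only [k₃]
      linarith [mul_le_mul_of_nonneg_left hWQ hCB, mul_le_mul_of_nonneg_left hs₂Q hC]
    exact hDv.trans (mul_le_mul_of_nonneg_right (by linarith) hQ)

lemma exists_variational_const {B C h E : ℝ} (hB : 0 ≤ B) (hC : 0 ≤ C) (hh : 0 < h)
    (hhBC : 16 * h ^ 2 * (B * C) ≤ 1) (hE : 0 ≤ E) :
    ∃ K, 0 < K ∧ ∀ P F s₁ s₂ : ℝ, 0 ≤ P → 0 ≤ F → 0 ≤ s₁ →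
      s₁ ≤ B * C * P → s₂ ≤ B * C ^ 2 * P ^ 2 + B * C * F → h * s₁ ≤ 2 * F + s₂ * h ^ 2 →
      4 * h * s₂ ≤
        2 * s₁ + (B * C ^ 3 * P ^ 3 + 3 * B * C ^ 2 * (P * F) + B * C * s₁) * (4 * h) ^ 2 →
      let W := (s₂ / 12 + C * s₁ / 6) * E
      2 * W ≤ K * (P ^ 2 + F) ∧
        C * (B * (C * P) * W + B * (W + C * s₁ / 6)) +
          (B * C ^ 3 * P ^ 3 + 3 * B * C ^ 2 * (P * F) + B * C * s₁) / 12 ≤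
            K * (P ^ 3 + P * F + F) ∧
        C * (B * W) + s₂ / 12 + C * s₂ / 6 ≤ K * (P ^ 2 + F) := by
  obtain ⟨A, hA, hinterp⟩ := exists_interpolation_const hB hC hh hhBC
  obtain ⟨K, hK, hvar⟩ := exists_variational_const_of_le hA hB hC hE
  refine ⟨K, hK, fun P F s₁ s₂ hP hF hs₁ h₁ h₂ h₃ h₄ => ?_⟩
  obtain ⟨hs₁N, hs₂N⟩ := hinterp P F s₁ s₂ hP hF hs₁ h₁ h₂ h₃ h₄
  exact hvar P F _ s₁ s₂ hP hF (min_le_left _ _) (min_le_right _ _) hs₁N hs₂N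

end Constants

theorem stmt_16 (m : ℕ) (T B : ℝ) (hT : 0 < T) (hB : 0 < B)
    (M : Matrix (Fin m) (Fin m) ℝ) :
    ∃ K : ℝ, 0 < K ∧
      ∀ (V : (Fin m → ℝ) → ℝ) (f : (Fin m → ℝ) → (Fin m → ℝ)),
        ContDiff ℝ 4 V → (∀ q, 0 ≤ V q) →
        (∀ q w, f q ⬝ᵥ w = -(fderiv ℝ V q) w) →
        (∀ q, ‖fderiv ℝ f q‖ ≤ B) →
        (∀ q, ‖fderiv ℝ (fderiv ℝ f) q‖ ≤ B) →
        (∀ q, @norm _ ContinuousLinearMap.hasOpNorm (fderiv ℝ (fderiv ℝ (fderiv ℝ f)) q) ≤ B) →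
        ∀ (qt pt u v ddu ddv : ℝ → (Fin m → ℝ)),
        (∀ t ∈ Set.Icc (0:ℝ) T, HasDerivAt qt (M⁻¹.mulVec (pt t)) t) →
        (∀ t ∈ Set.Icc (0:ℝ) T, HasDerivAt pt (f (qt t)) t) →
        u 0 = 0 → v 0 = 0 →
        -- first derivatives of `u`, `v` (the variational system)
        (∀ t ∈ Set.Icc (0:ℝ) T, HasDerivAt u
          (M⁻¹.mulVec ((fderiv ℝ f (qt t)) (v t)) +
            (1/12 : ℝ) • dddp m M⁻¹ f qt pt t) t) →
        (∀ t ∈ Set.Icc (0:ℝ) T, HasDerivAt v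
          (u t - (1/6 : ℝ) • dddq m M⁻¹ f qt pt t) t) →
        -- `ddu = ü`, `ddv = v̈`: derivatives of the right-hand sides above
        (∀ t ∈ Set.Icc (0:ℝ) T, HasDerivAt
          (fun s => M⁻¹.mulVec ((fderiv ℝ f (qt s)) (v s)) +
            (1/12 : ℝ) • dddp m M⁻¹ f qt pt s) (ddu t) t) →
        (∀ t ∈ Set.Icc (0:ℝ) T, HasDerivAt
          (fun s => u s - (1/6 : ℝ) • dddq m M⁻¹ f qt pt s) (ddv t) t) →
        supIcc m T u + supIcc m T v ≤
          K * (supIcc m T pt ^ 2 + supIcc m T (fun t => f (qt t))) ∧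
        supIcc m T ddu ≤
          K * (supIcc m T pt ^ 3 +
            supIcc m T pt * supIcc m T (fun t => f (qt t)) +
            supIcc m T (fun t => f (qt t))) ∧
        supIcc m T ddv ≤
          K * (supIcc m T pt ^ 2 + supIcc m T (fun t => f (qt t))) := by
  obtain ⟨C, hC₀, hC⟩ := M⁻¹.exists_norm_mulVec_le
  obtain ⟨h, hh, hhT, hhBC⟩ := exists_landau_step hT (mul_nonneg hB.le hC₀)
  obtain ⟨K, hK₀, hK⟩ := exists_variational_const hB.le hC₀ hh hhBC
    (E := T * exp ((C * B + 1) * T)) (by positivity)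
  refine ⟨K, hK₀, ?_⟩
  intro V f hV _ hfV hB₁ hB₂ hB₃ qt pt u v ddu ddv hq hp hu₀ hv₀ hu hv hddu hddv
  have hf : ContDiff ℝ 3 f := contDiff_of_dotProduct_eq_neg_fderiv hV hfV
  have hf₁ : Differentiable ℝ f := hf.differentiable (by norm_num)
  have hf' : ContDiff ℝ 2 (fderiv ℝ f) := hf.fderiv_right (by norm_num)
  have hf₂ : Differentiable ℝ (fderiv ℝ f) := hf'.differentiable (by norm_num)
  have hf₃ : Differentiable ℝ (fderiv ℝ (fderiv ℝ f)) :=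
    (hf'.fderiv_right (m := 1) (by norm_num)).differentiable (by norm_num)
  have hfq := fun t ht => hasDerivAt_comp_flow (hf₁ _) (hq t ht)
  have hd₁ := fun t ht => hasDerivAt_ddp (hf₂ _) (hq t ht) (hp t ht)
  have hd₂ := fun t ht => hasDerivAt_dddp (hf₁ _) (hf₂ _) (hf₃ _) (hq t ht) (hp t ht)
  obtain ⟨h₁, h₂, h₃, h₄⟩ := supIcc_flow_estimates hh hhT hC₀ hC hB₁ hB₂ hB₃ hp hfq hd₁ hd₂
  obtain ⟨huv, hddu', hddv'⟩ := supIcc_variational_estimates hT.le hC₀ hC hf₂ hB₁ hB₂ hB₃ hq hp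
    hfq hd₁ hd₂ hu₀ hv₀ hu hv hddu hddv
  obtain ⟨hKuv, hKddu, hKddv⟩ := hK _ _ _ _ (supIcc_nonneg _ _ _) (supIcc_nonneg _ _ _)
    (supIcc_nonneg _ _ _) h₁ h₂ h₃ h₄
  exact ⟨huv.trans hKuv, hddu'.trans hKddu, hddv'.trans hKddv⟩
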